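/- If α : Opens(X) → \mathbb{A} is a Heckmann \mathbb{A}-valuation (a map preserving ∅ ↦ ⊥ and X ↦ ⊤ and satisfying (H1): α(U) = ⊥ implies α(U ∪ V) = α(V), and (H2): α(U) = ⊤ implies α(U ∩ V) = α(V)), then the components α₁ = π₁ ∘ ι ∘ α and α₂ = π₂ ∘ ι ∘ α (via the embedding ι : \mathbb{A} ↪ Σ × Σ with ⊥ ↦ (0,0), m ↦ (1,0), ⊤ ↦ (1,1)) satisfy: α₁ preserves binary unions (α₁(U ∪ V) = α₁(U) ∨ α₁(V)) and α₂ preserves binary intersections (α₂(U ∩ V) = α₂(U) ∧ α₂(V)). -/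
import Mathlib


inductive Chain3 | bot | mid | top
deriving DecidableEq

/-- The embedding ⊥ ↦ (0,0), m ↦ (1,0), ⊤ ↦ (1,1) into Σ × Σ. -/
def Chain3.toPair : Chain3 → Bool × Bool
  | .bot => (false, false)
  | .mid => (true, false)
  | .top => (true, true)

open TopologicalSpace in
theorem heckmann_valuation_components {X : Type*} [TopologicalSpace X]
    (α : Opens X → Chain3)
    (hmono : ∀ U V : Opens X, U ≤ V →
      ((α U).toPair.1 ≤ (α V).toPair.1 ∧ (α U).toPair.2 ≤ (α V).toPair.2))
    (h0 : α ⊥ = Chain3.bot) (h1 : α ⊤ = Chain3.top)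
    (hH1 : ∀ U V : Opens X, α U = Chain3.bot → α (U ⊔ V) = α V)
    (hH2 : ∀ U V : Opens X, α U = Chain3.top → α (U ⊓ V) = α V) :
    (∀ U V : Opens X, (α (U ⊔ V)).toPair.1 = ((α U).toPair.1 || (α V).toPair.1)) ∧
    (∀ U V : Opens X, (α (U ⊓ V)).toPair.2 = ((α U).toPair.2 && (α V).toPair.2)) := by
  constructor
  · intro U V
    cases hU : α U with
    | bot => simp [hH1 U V hU, hU, Chain3.toPair]
    | mid =>
      have h := (hmono U (U ⊔ V) le_sup_left).1
      rw [hU] at h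
      revert h; cases α (U ⊔ V) <;> simp [Chain3.toPair]
    | top =>
      have h := (hmono U (U ⊔ V) le_sup_left).1
      rw [hU] at h
      revert h; cases α (U ⊔ V) <;> simp [Chain3.toPair]
  · intro U V
    cases hU : α U with
    | top => simp [hH2 U V hU, hU, Chain3.toPair]
    | bot =>
      have h := (hmono (U ⊓ V) U inf_le_left).2
      rw [hU] at h
      revert h; cases α (U ⊓ V) <;> simp [Chain3.toPair]
    | mid =>
      have h := (hmono (U ⊓ V) U inf_le_left).2
      rw [hU] at h
      revert h; cases α (U ⊓ V) <;> simp [Chain3.toPair]
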